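/- arXiv:2302.06435 — 2 statements merged into one kernel-verified Lean document; each statement's English description precedes it below -/
import Mathlib

section
/- Let L ⊆ ℕ and define its characteristic 'density on cycles' acceptance: suppose L = {m : ∃ k, m mod j_k ∈ B_k} where the cycles (j_k, B_k) are pairwise non-overlapping (unambiguous). Then L = ℕ (the acceptor is universal) if and only if Σ_k |B_k| / j_k = 1. -/
/-!
Acceptance is periodic with period `N = ∏ j i`, so the acceptor is universal iff all of
`0, …, N - 1` are accepted. Below `N` cycle `i` accepts exactly `|B i| * (N / j i)` numbers,
and by unambiguity these sets are disjoint, so `N * ∑ |B i| / j i` numbers below `N` are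
accepted; this count equals `N` iff the densities sum to `1`.
-/

open Finset Function

theorem card_filter_mod_mem_range_mul {j : ℕ} {B : Finset ℕ} (hB : B ⊆ range j) (q : ℕ) :
    #{m ∈ range (q * j) | m % j ∈ B} = q * #B := by
  induction q with
  | zero => simp
  | succ q ih =>
    have hlast : #{x ∈ range j | (q * j + x) % j ∈ B} = #B := by
      rw [filter_congr fun x hx => by rw [Nat.mul_add_mod', Nat.mod_eq_of_lt (mem_range.1 hx)],
        filter_mem_eq_inter, inter_eq_right.2 hB]
    rw [card_filter, add_one_mul, sum_range_add, ← card_filter, ← card_filter, ih, hlast,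
      add_one_mul]

section Cycles

variable {ι : Type*} {j : ι → ℕ} {B : ι → Finset ℕ}

theorem periodic_exists_mod_mem {N : ℕ} (hN : ∀ i, j i ∣ N) :
    Periodic (fun m => ∃ i, m % j i ∈ B i) N := by
  intro m
  have hmod : ∀ i, (m + N) % j i = m % j i := fun i => by
    obtain ⟨q, hq⟩ := hN i
    rw [hq, mul_comm]
    exact (Nat.periodic_mod (j i)).nat_mul q m
  simp only [hmod]

theorem card_filter_exists_mod_mem_range [Fintype ι]
    [DecidablePred fun m => ∃ i, m % j i ∈ B i] (hB : ∀ i, B i ⊆ range (j i))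
    (hunamb : ∀ m : ℕ, ∀ i i', m % j i ∈ B i → m % j i' ∈ B i' → i = i')
    {N : ℕ} (hN : ∀ i, j i ∣ N) :
    (#{m ∈ range N | ∃ i, m % j i ∈ B i} : ℚ) = N * ∑ i, (#(B i) : ℚ) / j i := by
  have hunion : {m ∈ range N | ∃ i, m % j i ∈ B i} =
      univ.biUnion fun i => {m ∈ range N | m % j i ∈ B i} := by
    ext m; simp
  have hdisj : (↑(univ : Finset ι) : Set ι).PairwiseDisjoint
      fun i => {m ∈ range N | m % j i ∈ B i} := fun i _ i' _ hne =>
    disjoint_left.2 fun m hm hm' => hne (hunamb m i i' (mem_filter.1 hm).2 (mem_filter.1 hm').2)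
  rw [hunion, card_biUnion hdisj, Nat.cast_sum, mul_sum]
  refine sum_congr rfl fun i _ => ?_
  obtain ⟨q, hq⟩ := hN i
  rw [hq, mul_comm, card_filter_mod_mem_range_mul (hB i)]
  rcases eq_or_ne (j i) 0 with h0 | h0
  · have hBi : B i = ∅ := subset_empty.1 (by simpa [h0] using hB i)
    simp [h0, hBi]
  · push_cast
    field_simp

end Cycles

/-- Universality of an unambiguous union of cycles via densities: the acceptor is
universal iff the densities `|B k| / j k` of its cycles sum to `1`. -/
theorem stmt7 (k : ℕ) (j : Fin k → ℕ) (B : Fin k → Finset ℕ)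
    (hj : ∀ i, 0 < j i) (hB : ∀ i, B i ⊆ Finset.range (j i))
    (hunamb : ∀ m : ℕ, ∀ i i' : Fin k, m % j i ∈ B i → m % j i' ∈ B i' → i = i')
    (L : Set ℕ) (hL : ∀ m, m ∈ L ↔ ∃ i, m % j i ∈ B i) :
    (∀ m, m ∈ L) ↔ (∑ i, ((B i).card : ℚ) / (j i : ℚ)) = 1 := by
  set N := ∏ i, j i
  have hN : ∀ i, j i ∣ N := fun i => dvd_prod_of_mem j (mem_univ i)
  have hNpos : 0 < N := prod_pos fun i _ => hj i
  calc (∀ m, m ∈ L) ↔ ∀ m ∈ range N, ∃ i, m % j i ∈ B i := by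
        simp only [hL, mem_range]
        refine ⟨fun h m _ => h m, fun h m => ?_⟩
        exact (periodic_exists_mod_mem hN).map_mod_nat m ▸ h _ (Nat.mod_lt m hNpos)
    _ ↔ #{m ∈ range N | ∃ i, m % j i ∈ B i} = #(range N) := card_filter_eq_iff.symm
    _ ↔ (#{m ∈ range N | ∃ i, m % j i ∈ B i} : ℚ) = N := by rw [card_range, Nat.cast_inj]
    _ ↔ (N : ℚ) * ∑ i, (#(B i) : ℚ) / j i = N * 1 := by
        rw [card_filter_exists_mod_mem_range hB hunamb hN, mul_one]
    _ ↔ _ := mul_right_inj' (by positivity)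
end

section
/- Let r be a fixed positive integer, let Q be a finite set of primes not dividing r, and for each q ∈ Q let B_q be a set of residues modulo r·q². Let L = {m ∈ ℕ : ∃q ∈ Q, m mod (r·q²) ∈ B_q}. Then L = ℕ (universality) iff for every s < r there exists q ∈ Q such that (s + t·r) mod (r·q²) ∈ B_q for all t < q². -/
private lemma mod_key (s u r q : ℕ) :
    (s + u * r) % (r * q ^ 2) = (s + (u % q ^ 2) * r) % (r * q ^ 2) := by
  have h1 : u * r ≡ (u % q ^ 2) * r [MOD q ^ 2 * r] :=
    (Nat.mod_modEq u (q ^ 2)).symm.mul_right' r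
  have h2 : s + u * r ≡ s + (u % q ^ 2) * r [MOD r * q ^ 2] := by
    rw [mul_comm r (q ^ 2)]
    exact (Nat.ModEq.refl s).add h1
  exact h2

/-- Universality reduction for cycles of lengths `r·q²`, `q` ranging over a finite
set of primes not dividing `r`: the language `{m : ∃ q ∈ Q, m % (r·q²) ∈ B q}` is
all of `ℕ` iff for every `s < r` there is `q ∈ Q` with `(s + t·r) % (r·q²) ∈ B q`
for all `t < q²`. -/
theorem stmt16 (r : ℕ) (hr : 0 < r) (Q : Finset ℕ)
    (hQ : ∀ q ∈ Q, Nat.Prime q ∧ ¬ q ∣ r) (B : ℕ → Finset ℕ) :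
    (∀ m : ℕ, ∃ q ∈ Q, m % (r * q ^ 2) ∈ B q) ↔
      (∀ s < r, ∃ q ∈ Q, ∀ t < q ^ 2, (s + t * r) % (r * q ^ 2) ∈ B q) := by
  constructor
  · intro h s hs
    by_contra hc
    push_neg at hc
    choose! t ht htB using hc
    -- build u with u ≡ t q [MOD q²] for all q ∈ Q
    obtain ⟨u, hu⟩ := Nat.chineseRemainderOfFinset t (fun q => q ^ 2) Q
      (fun q hq => pow_ne_zero 2 (hQ q hq).1.pos.ne')
      (by
        intro a ha b hb hab
        exact Nat.Coprime.pow 2 2 ((Nat.coprime_primes (hQ a ha).1 (hQ b hb).1).mpr hab))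
    obtain ⟨q, hq, hmem⟩ := h (s + u * r)
    have hmod : u % q ^ 2 = t q := by
      have := (hu q hq)
      have := this.symm
      rw [Nat.ModEq] at this
      rw [Nat.mod_eq_of_lt (ht q hq)] at this
      exact this.symm
    rw [mod_key s u r q, hmod] at hmem
    exact htB q hq hmem
  · intro h m
    obtain ⟨q, hq, hB⟩ := h (m % r) (Nat.mod_lt m hr)
    refine ⟨q, hq, ?_⟩
    have := hB ((m / r) % q ^ 2) (Nat.mod_lt _ (pow_pos (hQ q hq).1.pos 2))
    rw [← mod_key (m % r) (m / r) r q] at this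
    rwa [Nat.mod_add_div'] at this
end
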